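/- arXiv:2005.04015 — 2 statements merged into one kernel-verified Lean document; each statement's English description precedes it below -/
import Mathlib

section
/- Suppose V has dimension 3 over ℝ. Then for every element U of the Clifford algebra Cl(Q), the product U·reverse(U)·involute(U)·reverse(involute(U)) is a scalar (lies in the range of the algebra map ℝ → Cl(Q)); it equals reverse(involute(U))·reverse(U)·involute(U)·U; and the four expressions reverse(U)·involute(U)·reverse(involute(U)), involute(U)·reverse(U)·reverse(involute(U)), reverse(involute(U))·involute(U)·reverse(U), and reverse(involute(U))·reverse(U)·involute(U) are all equal. -/
/-!
Choose an orthogonal basis `e₀, e₁, e₂` of `V` and write `e = e₀e₁e₂`. Every element of `Cl(Q)` is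
a combination of the eight monomials in the `eᵢ`, and expanding in coordinates gives
`Ũ Û = a + t e` and `U Ũ = s + w` with `a, t, s` scalars and `w` a vector. Since `e` commutes
with every `eᵢ` it is central, so `Ũ Û` is central. Reversion and grade involution of `U` keep `a`
and flip the sign of `t`; comparing `Ũ Û` for `U` and for its images yields `Ũ Û = Û Ũ` and that
`U` commutes with its Clifford conjugate. Finally `U Ũ Û Ũ^ = (s + w)(s - w) = s² - Q(w)`, and the
remaining identities follow by moving the central factor `Ũ Û` around.
-/

open CliffordAlgebra

namespace CliffordAlgebra

variable {R V : Type*} [CommRing R] [AddCommGroup V] [Module R V] {Q : QuadraticForm R V}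

theorem ι_mul_ι_self_eq_smul_one (v : V) : ι Q v * ι Q v = Q v • 1 := by
  rw [ι_sq_scalar, Algebra.algebraMap_eq_smul_one]

theorem ι_mul_ι_mul_self (v : V) (t : CliffordAlgebra Q) : ι Q v * (ι Q v * t) = Q v • t := by
  rw [← mul_assoc, ι_mul_ι_self_eq_smul_one, smul_mul_assoc, one_mul]

theorem algebraMap_add_ι_mul_involute (s : R) (w : V) :
    (algebraMap R (CliffordAlgebra Q) s + ι Q w) * involute (algebraMap R _ s + ι Q w) =
      algebraMap R _ (s * s - Q w) := by
  rw [map_add, AlgHom.commutes, involute_ι, ← sub_eq_add_neg, mul_sub, add_mul, add_mul,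
    ← Algebra.commutes s (ι Q w), ι_sq_scalar, map_sub, map_mul]
  abel

section OrthogonalFamily

variable {κ : Type*} [LinearOrder κ] {b : κ → V} (hb : Pairwise fun i j ↦ Q.IsOrtho (b i) (b j))
include hb

theorem ι_mul_ι_of_lt {i j : κ} (h : j < i) :
    ι Q (b i) * ι Q (b j) = -(ι Q (b j) * ι Q (b i)) :=
  ι_mul_ι_comm_of_isOrtho (hb h.ne')

theorem ι_mul_ι_mul_of_lt {i j : κ} (h : j < i) (t : CliffordAlgebra Q) :
    ι Q (b i) * (ι Q (b j) * t) = -(ι Q (b j) * (ι Q (b i) * t)) := by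
  rw [← mul_assoc, ι_mul_ι_of_lt hb h, neg_mul, mul_assoc]

end OrthogonalFamily

section Dim3

variable (Q) in
def pseudoscalar (b : Fin 3 → V) : CliffordAlgebra Q := ι Q (b 0) * (ι Q (b 1) * ι Q (b 2))

variable (Q) in
noncomputable def ofCoords (b : Fin 3 → V) (c0 c1 c2 c3 c4 c5 c6 c7 : R) : CliffordAlgebra Q :=
  c0 • 1 + c1 • ι Q (b 0) + c2 • ι Q (b 1) + c3 • ι Q (b 2) +
    c4 • (ι Q (b 0) * ι Q (b 1)) + c5 • (ι Q (b 0) * ι Q (b 2)) +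
    c6 • (ι Q (b 1) * ι Q (b 2)) + c7 • pseudoscalar Q b

theorem involute_ofCoords (b : Fin 3 → V) (c0 c1 c2 c3 c4 c5 c6 c7 : R) :
    involute (ofCoords Q b c0 c1 c2 c3 c4 c5 c6 c7) =
      ofCoords Q b c0 (-c1) (-c2) (-c3) c4 c5 c6 (-c7) := by
  simp only [ofCoords, pseudoscalar, map_add, map_smul, map_mul, map_one, involute_ι, neg_mul,
    mul_neg, neg_neg, neg_smul, smul_neg]

section OrthogonalTriple

variable {b : Fin 3 → V} (hb : Pairwise fun i j ↦ Q.IsOrtho (b i) (b j))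
include hb

theorem reverse_ofCoords (c0 c1 c2 c3 c4 c5 c6 c7 : R) :
    reverse (ofCoords Q b c0 c1 c2 c3 c4 c5 c6 c7) =
      ofCoords Q b c0 c1 c2 c3 (-c4) (-c5) (-c6) (-c7) := by
  simp (disch := decide) only [ofCoords, pseudoscalar, map_add, map_smul, reverse.map_mul,
    reverse.map_one, reverse_ι, mul_assoc, ι_mul_ι_of_lt hb, ι_mul_ι_mul_of_lt hb, neg_mul,
    mul_neg, neg_neg, neg_smul, smul_neg]

theorem reverse_mul_involute_ofCoords (c0 c1 c2 c3 c4 c5 c6 c7 : R) :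
    reverse (ofCoords Q b c0 c1 c2 c3 c4 c5 c6 c7) *
        involute (ofCoords Q b c0 c1 c2 c3 c4 c5 c6 c7) =
      algebraMap R _ (c0 ^ 2 - c1 ^ 2 * Q (b 0) - c2 ^ 2 * Q (b 1) - c3 ^ 2 * Q (b 2) +
        c4 ^ 2 * (Q (b 0) * Q (b 1)) + c5 ^ 2 * (Q (b 0) * Q (b 2)) +
        c6 ^ 2 * (Q (b 1) * Q (b 2)) - c7 ^ 2 * (Q (b 0) * Q (b 1) * Q (b 2))) +
      (2 * (c3 * c4 - c2 * c5 + c1 * c6 - c0 * c7)) • pseudoscalar Q b := by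
  simp (disch := decide) only [ofCoords, pseudoscalar, map_add, map_smul, map_one, map_mul,
    reverse.map_mul, reverse_ι, reverse.map_one, involute_ι, Algebra.algebraMap_eq_smul_one,
    mul_add, add_mul, smul_mul_assoc, mul_smul_comm, smul_smul, mul_one, one_mul, mul_neg,
    neg_mul, smul_neg, neg_neg, smul_add, mul_assoc, ι_mul_ι_self_eq_smul_one, ι_mul_ι_mul_self,
    ι_mul_ι_of_lt hb, ι_mul_ι_mul_of_lt hb]
  module

theorem ofCoords_mul_reverse (c0 c1 c2 c3 c4 c5 c6 c7 : R) :
    ofCoords Q b c0 c1 c2 c3 c4 c5 c6 c7 * reverse (ofCoords Q b c0 c1 c2 c3 c4 c5 c6 c7) =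
      algebraMap R _ (c0 ^ 2 + c1 ^ 2 * Q (b 0) + c2 ^ 2 * Q (b 1) + c3 ^ 2 * Q (b 2) +
        c4 ^ 2 * (Q (b 0) * Q (b 1)) + c5 ^ 2 * (Q (b 0) * Q (b 2)) +
        c6 ^ 2 * (Q (b 1) * Q (b 2)) + c7 ^ 2 * (Q (b 0) * Q (b 1) * Q (b 2))) +
      ι Q ((2 * (c0 * c1 + c2 * c4 * Q (b 1) + c3 * c5 * Q (b 2) + c6 * c7 * (Q (b 1) * Q (b 2))))
          • b 0 +
        (2 * (c0 * c2 - c1 * c4 * Q (b 0) + c3 * c6 * Q (b 2) - c5 * c7 * (Q (b 0) * Q (b 2))))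
          • b 1 +
        (2 * (c0 * c3 - c1 * c5 * Q (b 0) - c2 * c6 * Q (b 1) + c4 * c7 * (Q (b 0) * Q (b 1))))
          • b 2) := by
  simp (disch := decide) only [ofCoords, pseudoscalar, map_add, map_smul, map_mul,
    reverse.map_mul, reverse_ι, reverse.map_one, Algebra.algebraMap_eq_smul_one,
    mul_add, add_mul, smul_mul_assoc, mul_smul_comm, smul_smul, mul_one, one_mul, mul_neg,
    neg_mul, smul_neg, neg_neg, smul_add, mul_assoc, ι_mul_ι_self_eq_smul_one, ι_mul_ι_mul_self,
    ι_mul_ι_of_lt hb, ι_mul_ι_mul_of_lt hb]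
  module

theorem ofCoords_mul_ι (c0 c1 c2 c3 c4 c5 c6 c7 d0 d1 d2 : R) :
    ofCoords Q b c0 c1 c2 c3 c4 c5 c6 c7 * ι Q (d0 • b 0 + d1 • b 1 + d2 • b 2) =
      ofCoords Q b (c1 * Q (b 0) * d0 + c2 * Q (b 1) * d1 + c3 * Q (b 2) * d2)
        (c0 * d0 + c4 * Q (b 1) * d1 + c5 * Q (b 2) * d2)
        (c0 * d1 - c4 * Q (b 0) * d0 + c6 * Q (b 2) * d2)
        (c0 * d2 - c5 * Q (b 0) * d0 - c6 * Q (b 1) * d1)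
        (c1 * d1 - c2 * d0 + c7 * Q (b 2) * d2)
        (c1 * d2 - c3 * d0 - c7 * Q (b 1) * d1)
        (c2 * d2 - c3 * d1 + c7 * Q (b 0) * d0)
        (c4 * d2 - c5 * d1 + c6 * d0) := by
  simp (disch := decide) only [ofCoords, pseudoscalar, map_add, map_smul,
    mul_add, add_mul, smul_mul_assoc, mul_smul_comm, smul_smul, mul_one, one_mul, mul_neg,
    smul_neg, neg_neg, smul_add, mul_assoc, ι_mul_ι_self_eq_smul_one, ι_mul_ι_mul_self,
    ι_mul_ι_of_lt hb, ι_mul_ι_mul_of_lt hb]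
  module

theorem commute_pseudoscalar_ι (i : Fin 3) : Commute (pseudoscalar Q b) (ι Q (b i)) := by
  fin_cases i <;>
  simp (disch := decide) only [Commute, SemiconjBy, pseudoscalar, mul_assoc,
    ι_mul_ι_self_eq_smul_one, ι_mul_ι_mul_self, ι_mul_ι_of_lt hb, ι_mul_ι_mul_of_lt hb, mul_neg,
    neg_neg, mul_smul_comm, mul_one, Fin.zero_eta, Fin.mk_one, Fin.reduceFinMk]

end OrthogonalTriple

section Basis

variable {B : Module.Basis (Fin 3) R V} (hB : Pairwise fun i j ↦ Q.IsOrtho (B i) (B j))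
include hB

theorem commute_pseudoscalar (u : CliffordAlgebra Q) : Commute (pseudoscalar Q B) u := by
  induction u using CliffordAlgebra.induction with
  | algebraMap r => exact Algebra.commute_algebraMap_right r _
  | ι m =>
    rw [← B.sum_repr m, map_sum]
    refine Commute.sum_right _ _ _ fun i _ ↦ ?_
    rw [map_smul]
    exact (commute_pseudoscalar_ι hB i).smul_right _
  | mul x y hx hy => exact hx.mul_right hy
  | add x y hx hy => exact hx.add_right hy

theorem exists_eq_ofCoords (u : CliffordAlgebra Q) :
    ∃ c0 c1 c2 c3 c4 c5 c6 c7 : R, u = ofCoords Q B c0 c1 c2 c3 c4 c5 c6 c7 := by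
  induction u using CliffordAlgebra.right_induction with
  | algebraMap r =>
    exact ⟨r, 0, 0, 0, 0, 0, 0, 0, by simp [ofCoords, Algebra.algebraMap_eq_smul_one]⟩
  | add x y hx hy =>
    obtain ⟨a0, a1, a2, a3, a4, a5, a6, a7, rfl⟩ := hx
    obtain ⟨b0, b1, b2, b3, b4, b5, b6, b7, rfl⟩ := hy
    refine ⟨a0 + b0, a1 + b1, a2 + b2, a3 + b3, a4 + b4, a5 + b5, a6 + b6, a7 + b7, ?_⟩
    simp only [ofCoords, add_smul]
    abel
  | mul_ι m x hx =>
    obtain ⟨c0, c1, c2, c3, c4, c5, c6, c7, rfl⟩ := hx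
    rw [← B.sum_repr m, Fin.sum_univ_three, ofCoords_mul_ι hB]
    exact ⟨_, _, _, _, _, _, _, _, rfl⟩

theorem exists_mul_reverse_eq_add_ι (U : CliffordAlgebra Q) :
    ∃ (s : R) (w : V), U * reverse U = algebraMap R _ s + ι Q w := by
  obtain ⟨c0, c1, c2, c3, c4, c5, c6, c7, rfl⟩ := exists_eq_ofCoords hB U
  exact ⟨_, _, ofCoords_mul_reverse hB c0 c1 c2 c3 c4 c5 c6 c7⟩

theorem commute_reverse_mul_involute (U u : CliffordAlgebra Q) :
    Commute (reverse U * involute U) u := by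
  obtain ⟨c0, c1, c2, c3, c4, c5, c6, c7, rfl⟩ := exists_eq_ofCoords hB U
  rw [reverse_mul_involute_ofCoords hB]
  exact (Algebra.commute_algebraMap_left _ u).add_left ((commute_pseudoscalar hB u).smul_left _)

theorem commute_reverse_involute (U : CliffordAlgebra Q) : Commute (reverse U) (involute U) := by
  -- `Û Ũ` is `Ṽ V̂` for the Clifford conjugate `V` of `U`, which flips the sign of `t` twice.
  have h : involute U * reverse U =
      reverse (reverse (involute U)) * involute (reverse (involute U)) := by
    rw [reverse_reverse, reverse_involute, involute_involute]
  obtain ⟨c0, c1, c2, c3, c4, c5, c6, c7, rfl⟩ := exists_eq_ofCoords hB U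
  rw [Commute, SemiconjBy, reverse_mul_involute_ofCoords hB, h, involute_ofCoords,
    reverse_ofCoords hB, reverse_mul_involute_ofCoords hB]
  congr 2 <;> ring

theorem commute_self_reverse_involute (U : CliffordAlgebra Q) :
    Commute U (reverse (involute U)) := by
  -- `U Ũ^` and `Ũ^ U` are `Ṽ V̂` for `V = Ũ` and `V = Û`, each of which flips the sign of `t`.
  have h₁ : U * reverse (involute U) = reverse (reverse U) * involute (reverse U) := by
    rw [reverse_reverse, reverse_involute]
  have h₂ : reverse (involute U) * U = reverse (involute U) * involute (involute U) := by
    rw [involute_involute]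
  obtain ⟨c0, c1, c2, c3, c4, c5, c6, c7, rfl⟩ := exists_eq_ofCoords hB U
  rw [Commute, SemiconjBy, h₁, h₂, reverse_ofCoords hB, reverse_mul_involute_ofCoords hB,
    involute_ofCoords, reverse_mul_involute_ofCoords hB]
  congr 2 <;> ring

end Basis
end Dim3
end CliffordAlgebra

theorem QuadraticForm.exists_orthogonal_basis_fin {K V : Type*} [Field K] [Invertible (2 : K)]
    [AddCommGroup V] [Module K V] [FiniteDimensional K V] (Q : QuadraticForm K V) {n : ℕ}
    (h : Module.finrank K V = n) :
    ∃ B : Module.Basis (Fin n) K V, Pairwise fun i j ↦ Q.IsOrtho (B i) (B j) := by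
  obtain ⟨v, hv⟩ :=
    LinearMap.BilinForm.exists_orthogonal_basis (QuadraticForm.associated_isSymm K Q)
  refine ⟨v.reindex (finCongr h), fun i j hij ↦ ?_⟩
  simp only [Module.Basis.reindex_apply]
  exact QuadraticMap.associated_isOrtho.mp (hv ((finCongr h).symm.injective.ne hij))

theorem stmt_11 {V : Type*} [AddCommGroup V] [Module ℝ V] (Q : QuadraticForm ℝ V)
    (h : Module.finrank ℝ V = 3) (U : CliffordAlgebra Q) :
    U * reverse U * involute U * reverse (involute U) ∈
      Set.range (algebraMap ℝ (CliffordAlgebra Q)) ∧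
    U * reverse U * involute U * reverse (involute U) =
      reverse (involute U) * reverse U * involute U * U ∧
    reverse U * involute U * reverse (involute U) =
      involute U * reverse U * reverse (involute U) ∧
    reverse U * involute U * reverse (involute U) =
      reverse (involute U) * involute U * reverse U ∧
    reverse U * involute U * reverse (involute U) =
      reverse (involute U) * reverse U * involute U := by
  have : FiniteDimensional ℝ V := .of_finrank_eq_succ h
  obtain ⟨B, hB⟩ := Q.exists_orthogonal_basis_fin h
  obtain ⟨s, w, hUU⟩ := exists_mul_reverse_eq_add_ι hB U
  have hz := commute_reverse_mul_involute hB U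
  have hri := commute_reverse_involute hB U
  have huk := commute_self_reverse_involute hB U
  refine ⟨⟨s * s - Q w, ?_⟩, ?_, by rw [hri.eq], by rw [(hz _).eq, hri.eq, mul_assoc],
    by rw [(hz _).eq, mul_assoc]⟩
  · rw [mul_assoc (U * reverse U), reverse_involute, ← map_mul, hUU, algebraMap_add_ι_mul_involute]
  · rw [mul_assoc U, ← (hz U).eq, mul_assoc, huk.eq, ← mul_assoc, (hz _).eq,
      mul_assoc _ (reverse U)]
end

section
/- Suppose V has dimension 3 over ℝ. Then for every element U of the Clifford algebra Cl(Q), the products involute(U)·reverse(U) and U·reverse(involute(U)) both lie in the center of Cl(Q); in particular involute(U)·reverse(U) = reverse(U)·involute(U) and U·reverse(involute(U)) = reverse(involute(U))·U. -/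
/-!
Choose a basis `e₀, e₁, e₂` of `V` that is orthogonal for `Q`. The eight ordered monomials in the
`eᵢ` span `Cl(Q)`, and the Clifford conjugation `x ↦ reverse (involute x)` fixes `1` and
`e₀e₁e₂` while negating the six others. So `x + conj x` is a combination of `1` and `e₀e₁e₂`,
which are both central: each `eᵢ` anticommutes with exactly two factors of `e₀e₁e₂`.
Consequently `x` commutes with `conj x = (x + conj x) - x`, and `x * conj x`, being fixed by
the conjugation, is half of the central element `x * conj x + conj (x * conj x)`.
Taking `x = involute U` gives the claims about `involute U * reverse U`.
-/

open CliffordAlgebra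

theorem commute_mul_of_anticommute {A : Type*} [Ring A] {x y z : A}
    (hy : x * y = -(y * x)) (hz : x * z = -(z * x)) : Commute x (y * z) := by
  rw [Commute, SemiconjBy, ← mul_assoc, hy, neg_mul, mul_assoc, hz, mul_neg, neg_neg, mul_assoc]

theorem commute_of_add_mem_center {A : Type*} [Ring A] {x y : A} (h : x + y ∈ Set.center A) :
    Commute x y := by
  have hy : y = x + y - x := (add_sub_cancel_left x y).symm
  rw [Commute, SemiconjBy, hy, mul_sub, sub_mul, (Semigroup.mem_center_iff.1 h x)]

namespace CliffordAlgebra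

variable {R M : Type*} [CommRing R] [AddCommGroup M] [Module R M] {Q : QuadraticForm R M}

theorem mem_center_of_forall_commute_ι {z : CliffordAlgebra Q} (h : ∀ m, Commute (ι Q m) z) :
    z ∈ Subalgebra.center R (CliffordAlgebra Q) := by
  have hle : Algebra.adjoin R (Set.range (ι Q)) ≤ Subalgebra.centralizer R {z} :=
    Algebra.adjoin_le <| Set.range_subset_iff.2 fun m =>
      (Subalgebra.mem_centralizer_iff R).2 fun _ hg => (Set.mem_singleton_iff.1 hg) ▸ (h m).symm.eq
  rw [adjoin_range_ι] at hle
  exact Subalgebra.mem_center_iff.2 fun y =>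
    ((Subalgebra.mem_centralizer_iff R).1 (hle Algebra.mem_top) z rfl).symm

theorem eq_top_of_one_mem_of_mul_ι_mem {N : Submodule R (CliffordAlgebra Q)} (h1 : 1 ∈ N)
    (hι : ∀ x ∈ N, ∀ m, x * ι Q m ∈ N) : N = ⊤ := by
  suffices ∀ y x, x ∈ N → x * y ∈ N from
    eq_top_iff.2 fun y _ => by simpa using this y 1 h1
  intro y
  induction y using CliffordAlgebra.induction with
  | algebraMap r =>
    intro x hx
    rw [← Algebra.commutes, ← Algebra.smul_def]
    exact N.smul_mem r hx
  | ι m => exact fun x hx => hι x hx m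
  | mul y z hy hz => exact fun x hx => mul_assoc x y z ▸ hz _ (hy x hx)
  | add y z hy hz => exact fun x hx => (mul_add x y z).symm ▸ N.add_mem (hy x hx) (hz x hx)

theorem reverse_involute_ι_mul_ι_mul_ι_of_isOrtho {u v w : M} (huv : Q.IsOrtho u v)
    (huw : Q.IsOrtho u w) (hvw : Q.IsOrtho v w) :
    reverse (involute (ι Q u * (ι Q v * ι Q w))) = ι Q u * (ι Q v * ι Q w) := by
  have hrev : reverse (involute (ι Q u * (ι Q v * ι Q w))) = -(ι Q w * (ι Q v * ι Q u)) := by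
    simp [mul_assoc]
  rw [hrev, ι_mul_ι_mul_of_isOrtho _ hvw.symm, neg_neg, ι_mul_ι_comm_of_isOrtho huw.symm, mul_neg,
    ι_mul_ι_mul_of_isOrtho _ huv.symm, neg_neg]

section OrthogonalBasis

variable (e : Module.Basis (Fin 3) R M)

def basisMonomials : Set (CliffordAlgebra Q) :=
  {1, ι Q (e 0), ι Q (e 1), ι Q (e 2), ι Q (e 0) * ι Q (e 1), ι Q (e 0) * ι Q (e 2),
    ι Q (e 1) * ι Q (e 2), ι Q (e 0) * (ι Q (e 1) * ι Q (e 2))}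

variable {e}

theorem span_basisMonomials_eq_top (he : Pairwise fun i j => Q.IsOrtho (e i) (e j)) :
    Submodule.span R (basisMonomials (Q := Q) e) = ⊤ := by
  refine eq_top_of_one_mem_of_mul_ι_mem (Submodule.subset_span (by simp [basisMonomials]))
    fun x hx m => ?_
  rw [← e.sum_repr m, map_sum, Finset.mul_sum]
  refine Submodule.sum_mem _ fun i _ => ?_
  rw [map_smul, mul_smul_comm]
  refine Submodule.smul_mem _ _ ?_
  induction hx using Submodule.span_induction with
  | mem g hg =>
    have sq j y : ι Q (e j) * (ι Q (e j) * y) = Q (e j) • y := by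
      rw [← mul_assoc, ι_sq_scalar, Algebra.smul_def]
    have swap10 := ι_mul_ι_comm_of_isOrtho (he (by decide : (1 : Fin 3) ≠ 0))
    have swap20 := ι_mul_ι_comm_of_isOrtho (he (by decide : (2 : Fin 3) ≠ 0))
    have swap21 := ι_mul_ι_comm_of_isOrtho (he (by decide : (2 : Fin 3) ≠ 1))
    have swap10' := (ι_mul_ι_mul_of_isOrtho (Q := Q) · (he (by decide : (1 : Fin 3) ≠ 0)))
    simp only [basisMonomials, Set.mem_insert_iff, Set.mem_singleton_iff] at hg
    -- each of the 24 products `g * eᵢ` normalises to `± r • g'` for a monomial `g'`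
    fin_cases i <;> rcases hg with rfl | rfl | rfl | rfl | rfl | rfl | rfl | rfl <;>
      simp only [Fin.zero_eta, Fin.mk_one, Fin.reduceFinMk, mul_assoc, one_mul, mul_one,
        ι_sq_scalar, sq, swap10, swap20, swap21, swap10', mul_neg, neg_neg, mul_smul_comm,
        Algebra.algebraMap_eq_smul_one, Submodule.neg_mem_iff] <;>
      first
        | exact Submodule.smul_mem _ _ (Submodule.subset_span (by simp [basisMonomials]))
        | exact Submodule.subset_span (by simp [basisMonomials])
  | zero => simp
  | add x y _ _ hx hy => rw [add_mul]; exact add_mem hx hy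
  | smul r x _ hx => rw [smul_mul_assoc]; exact Submodule.smul_mem _ r hx

theorem ι_mul_ι_mul_ι_mem_center (he : Pairwise fun i j => Q.IsOrtho (e i) (e j)) :
    ι Q (e 0) * (ι Q (e 1) * ι Q (e 2)) ∈ Subalgebra.center R (CliffordAlgebra Q) := by
  have anti : ∀ i j, i ≠ j → ι Q (e i) * ι Q (e j) = -(ι Q (e j) * ι Q (e i)) :=
    fun i j hij => ι_mul_ι_comm_of_isOrtho (he hij)
  have cycle : ∀ i j k, i ≠ j → i ≠ k →
      Commute (ι Q (e i)) (ι Q (e i) * (ι Q (e j) * ι Q (e k))) ∧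
        ι Q (e i) * (ι Q (e j) * ι Q (e k)) = ι Q (e j) * (ι Q (e k) * ι Q (e i)) :=
    fun i j k hij hik =>
      have h := commute_mul_of_anticommute (anti i j hij) (anti i k hik)
      ⟨(Commute.refl _).mul_right h, by rw [h.eq, mul_assoc]⟩
  obtain ⟨h0, rot0⟩ := cycle 0 1 2 (by decide) (by decide)
  obtain ⟨h1, rot1⟩ := cycle 1 2 0 (by decide) (by decide)
  obtain ⟨h2, -⟩ := cycle 2 0 1 (by decide) (by decide)
  refine mem_center_of_forall_commute_ι fun m => ?_
  rw [← e.sum_repr m, map_sum]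
  refine Commute.sum_left _ _ _ fun i _ => ?_
  rw [map_smul]
  refine Commute.smul_left ?_ _
  fin_cases i
  · exact h0
  · exact rot0 ▸ h1
  · exact (rot0.trans rot1) ▸ h2

theorem add_reverse_involute_mem_center (he : Pairwise fun i j => Q.IsOrtho (e i) (e j))
    (x : CliffordAlgebra Q) :
    x + reverse (involute x) ∈ Subalgebra.center R (CliffordAlgebra Q) := by
  have hx : x ∈ Submodule.span R (basisMonomials e) :=
    (span_basisMonomials_eq_top he).symm ▸ Submodule.mem_top
  induction hx using Submodule.span_induction with
  | mem g hg =>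
    have h01 := he (by decide : (0 : Fin 3) ≠ 1)
    have h02 := he (by decide : (0 : Fin 3) ≠ 2)
    have h12 := he (by decide : (1 : Fin 3) ≠ 2)
    simp only [basisMonomials, Set.mem_insert_iff, Set.mem_singleton_iff] at hg
    rcases hg with rfl | rfl | rfl | rfl | rfl | rfl | rfl | rfl
    · rw [map_one, reverse.map_one]
      exact add_mem (one_mem _) (one_mem _)
    iterate 6 simp [h01, h02, h12]
    · rw [reverse_involute_ι_mul_ι_mul_ι_of_isOrtho h01 h02 h12]
      exact add_mem (ι_mul_ι_mul_ι_mem_center he) (ι_mul_ι_mul_ι_mem_center he)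
  | zero => simp
  | add y z _ _ hy hz =>
    rw [map_add, map_add, add_add_add_comm]
    exact add_mem hy hz
  | smul r y _ hy =>
    rw [map_smul, map_smul, ← smul_add]
    exact Subalgebra.smul_mem _ hy r

end OrthogonalBasis

section Field

variable {K V : Type*} [Field K] [Invertible (2 : K)] [AddCommGroup V] [Module K V]
  {Q : QuadraticForm K V}

theorem add_reverse_involute_mem_center_of_finrank_eq_three (h : Module.finrank K V = 3)
    (x : CliffordAlgebra Q) :
    x + reverse (involute x) ∈ Subalgebra.center K (CliffordAlgebra Q) := by
  have : FiniteDimensional K V := Module.finite_of_finrank_eq_succ h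
  have hbasis := LinearMap.BilinForm.exists_orthogonal_basis (QuadraticForm.associated_isSymm K Q)
  rw [h] at hbasis
  obtain ⟨e, he⟩ := hbasis
  exact add_reverse_involute_mem_center (e := e)
    (fun i j hij => QuadraticMap.associated_isOrtho.1 (he hij)) x

theorem mul_reverse_involute_mem_center_of_finrank_eq_three (h : Module.finrank K V = 3)
    (x : CliffordAlgebra Q) :
    x * reverse (involute x) ∈ Subalgebra.center K (CliffordAlgebra Q) := by
  set z := x * reverse (involute x)
  have hz : reverse (involute z) = z := by
    simp only [z, map_mul, reverse.map_mul, reverse_involute, reverse_reverse, involute_involute]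
  have h2z := add_reverse_involute_mem_center_of_finrank_eq_three h z
  rw [hz, ← two_smul K z] at h2z
  simpa [smul_smul] using Subalgebra.smul_mem _ h2z (⅟2 : K)

end Field

end CliffordAlgebra

theorem stmt_13 {V : Type*} [AddCommGroup V] [Module ℝ V] (Q : QuadraticForm ℝ V)
    (h : Module.finrank ℝ V = 3) (U : CliffordAlgebra Q) :
    involute U * reverse U ∈ Subalgebra.center ℝ (CliffordAlgebra Q) ∧
    U * reverse (involute U) ∈ Subalgebra.center ℝ (CliffordAlgebra Q) ∧
    involute U * reverse U = reverse U * involute U ∧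
    U * reverse (involute U) = reverse (involute U) * U := by
  have hcenter := mul_reverse_involute_mem_center_of_finrank_eq_three (Q := Q) h
  have hcomm (x : CliffordAlgebra Q) :=
    commute_of_add_mem_center (add_reverse_involute_mem_center_of_finrank_eq_three h x)
  have hU : reverse (involute (involute U)) = reverse U := by rw [involute_involute]
  exact ⟨hU ▸ hcenter (involute U), hcenter U, hU ▸ (hcomm (involute U)).eq, (hcomm U).eq⟩
end
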